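/- Let H = [[a,b],[b̄,c]] be a Hermitian 2×2 matrix and H₀ = [[a,b],[b̄,0]]. Define β : ℂ² → ℂ* by β(z,η) = exp(−π c η²/2). Let Λ ⊂ ℂ² be a subgroup all of whose elements have real second coordinate, and suppose Im H(λ,μ) ∈ ℤ for λ,μ ∈ Λ with semi-character ρ. Then α^{(H₀,ρ)}_λ(x) = β(x+λ)·α^{(H,ρ)}_λ(x)·β(x)^{−1} for all λ ∈ Λ and x ∈ ℂ². -/

import Mathlib

open Complex

/-- The pairing `H(x,y) = a x₁ȳ₁ + b x₁ȳ₂ + b̄ x₂ȳ₁ + c x₂ȳ₂` for the Hermitian matrix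
`H = [[a,b],[b̄,c]]`. -/
noncomputable def HpairFull (a : ℝ) (b : ℂ) (c : ℝ) (x y : ℂ × ℂ) : ℂ :=
  (a : ℂ) * x.1 * (starRingEnd ℂ) y.1 + b * x.1 * (starRingEnd ℂ) y.2
    + (starRingEnd ℂ) b * x.2 * (starRingEnd ℂ) y.1 + (c : ℂ) * x.2 * (starRingEnd ℂ) y.2

/-- The theta factor `α^{(H,ρ)}_λ(x) = ρ(λ)·exp(π H(x,λ) + (π/2) H(λ,λ))`. -/
noncomputable def thetaFactorFull (a : ℝ) (b : ℂ) (c : ℝ) (ρ : ℂ × ℂ → ℂ) (l x : ℂ × ℂ) : ℂ :=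
  ρ l * Complex.exp ((Real.pi : ℂ) * HpairFull a b c x l
    + (Real.pi : ℂ) / 2 * HpairFull a b c l l)

/-- The coboundary function `β(z,η) = exp(−π c η²/2)`. -/
noncomputable def betaFun (c : ℝ) (x : ℂ × ℂ) : ℂ :=
  Complex.exp (-(Real.pi : ℂ) * (c : ℂ) * x.2 ^ 2 / 2)

/-!
Changing `c` multiplies the theta factor by `exp (π c (x₂ λ̄₂ + λ₂ λ̄₂ / 2))`, while
`β(x + λ) β(x)⁻¹ = exp (-π c (x₂ λ₂ + λ₂² / 2))`; for real `λ₂` the two exponents cancel.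
-/

open ComplexConjugate

theorem HpairFull_eq_HpairFull_zero_add (a : ℝ) (b : ℂ) (c : ℝ) (x y : ℂ × ℂ) :
    HpairFull a b c x y = HpairFull a b 0 x y + c * x.2 * conj y.2 := by
  simp only [HpairFull, ofReal_zero]
  ring

theorem thetaFactorFull_eq_mul_exp (a : ℝ) (b : ℂ) (c : ℝ) (ρ : ℂ × ℂ → ℂ) (l x : ℂ × ℂ) :
    thetaFactorFull a b c ρ l x = thetaFactorFull a b 0 ρ l x
      * exp (Real.pi * c * (x.2 * conj l.2 + l.2 * conj l.2 / 2)) := by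
  simp only [thetaFactorFull, HpairFull_eq_HpairFull_zero_add a b c, mul_assoc, ← exp_add]
  ring_nf

theorem betaFun_add_mul_inv (c : ℝ) (x l : ℂ × ℂ) :
    betaFun c (x + l) * (betaFun c x)⁻¹ = exp (-(Real.pi * c * (x.2 * l.2 + l.2 * l.2 / 2))) := by
  rw [betaFun, betaFun, ← exp_neg, ← exp_add, Prod.snd_add]
  ring_nf

theorem thetaFactor_coboundary_general (a : ℝ) (b : ℂ) (c : ℝ)
    (Λ : AddSubgroup (ℂ × ℂ))
    (hΛreal : ∀ l ∈ Λ, (l.2).im = 0)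
    (ρ : ℂ × ℂ → ℂ) :
    ∀ l ∈ Λ, ∀ x : ℂ × ℂ,
      thetaFactorFull a b 0 ρ l x
        = betaFun c (x + l) * thetaFactorFull a b c ρ l x * (betaFun c x)⁻¹ := by
  intro l hl x
  have hconj : conj l.2 = l.2 := conj_eq_iff_im.mpr (hΛreal l hl)
  rw [mul_right_comm, betaFun_add_mul_inv, thetaFactorFull_eq_mul_exp a b c, hconj,
    mul_left_comm, ← exp_add, neg_add_cancel, exp_zero, mul_one]

/-- The theta factors for `H = [[a,b],[b̄,c]]` and `H₀ = [[a,b],[b̄,0]]` are cohomologous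
via the coboundary `β(z,η) = exp(−π c η²/2)`:
`α^{(H₀,ρ)}_λ(x) = β(x+λ)·α^{(H,ρ)}_λ(x)·β(x)⁻¹` for all `λ ∈ Λ`. -/
theorem thetaFactor_coboundary (a : ℝ) (b : ℂ) (c : ℝ)
    (Λ : AddSubgroup (ℂ × ℂ))
    (hΛreal : ∀ l ∈ Λ, (l.2).im = 0)
    (hint : ∀ l ∈ Λ, ∀ m ∈ Λ, ∃ k : ℤ, (HpairFull a b c l m).im = k)
    (ρ : ℂ × ℂ → ℂ) :
    ∀ l ∈ Λ, ∀ x : ℂ × ℂ,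
      thetaFactorFull a b 0 ρ l x
        = betaFun c (x + l) * thetaFactorFull a b c ρ l x * (betaFun c x)⁻¹ :=
  thetaFactor_coboundary_general a b c Λ hΛreal ρ
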